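/- arXiv:2003.13095 — 5 statements merged into one kernel-verified Lean document; each statement's English description precedes it below -/
import Mathlib

section
/- Let F : D → M_{n×n}(ℂ) be defined by F(x) = Σ_{k=0}^p A_k x^k for fixed matrices A_0,…,A_p ∈ M_{n×n}(ℂ), where D ⊆ ℂ. Let Z(D) = {x ∈ D : F(x) has a repeated eigenvalue}. Then either Z(D) = D or Z(D) is finite. -/
open Finset Polynomial

/-!
Regard `F` as one matrix `M` over `ℂ[X]`. Its characteristic polynomial `P` is monic over `ℂ[X]`
and specializes at each `x` to the characteristic polynomial of `F x`, which has a repeated root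
exactly when it is not coprime to its derivative, i.e. when the resultant of `P` and `P'` vanishes
at `x`. Taking the resultant with the fixed degrees `deg P` and `deg P - 1` makes it commute with
specialization. A polynomial in `x` vanishes either identically or at finitely many points.
-/

theorem Polynomial.sep_isRoot_eq_self_or_finite {R : Type*} [CommRing R] [IsDomain R]
    (r : R[X]) (D : Set R) :
    {x ∈ D | r.IsRoot x} = D ∨ {x ∈ D | r.IsRoot x}.Finite := by
  by_cases hr : r = 0
  · left
    simp [hr]
  · exact .inr <| (finite_setOfPred_isRoot hr).subset fun _ hx ↦ hx.2

theorem Polynomial.Monic.not_nodup_roots_map_iff {R K : Type*} [CommRing R] [Field K]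
    [IsAlgClosed K] [CharZero K] {P : R[X]} (hP : P.Monic) (φ : R →+* K) :
    ¬ (P.map φ).roots.Nodup ↔
      φ (resultant P (derivative P) P.natDegree (P.natDegree - 1)) = 0 := by
  have hPφ : P.map φ ≠ 0 := (hP.map φ).ne_zero
  rw [nodup_roots_iff_of_splits hPφ (IsAlgClosed.splits _), ← resultant_map_map,
    ← derivative_map, ← hP.natDegree_map φ, ← natDegree_derivative, resultant_eq_zero_iff,
    Separable]
  simp [hPφ]

theorem Matrix.map_evalRingHom_sum_X_pow_smul {R ι : Type*} [CommRing R]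
    (A : ℕ → Matrix ι ι R) (s : Finset ℕ) (x : R) :
    (∑ k ∈ s, (X : R[X]) ^ k • (A k).map C).map (evalRingHom x) = ∑ k ∈ s, x ^ k • A k := by
  ext i j
  simp only [Matrix.map_apply, Matrix.sum_apply, Matrix.smul_apply, coe_evalRingHom,
    eval_finsetSum, smul_eq_mul, eval_mul, eval_pow, eval_X, eval_C]

/-- if `F x = ∑_{k=0}^p A_k x^k` is a matrix polynomial on `D ⊆ ℂ`,
then the set of `x ∈ D` where `F x` has a repeated eigenvalue is either all of
`D` or finite. -/
theorem repeated_eigenvalue_matrix_polynomial (n p : ℕ) (D : Set ℂ)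
    (A : ℕ → Matrix (Fin n) (Fin n) ℂ)
    (F : ℂ → Matrix (Fin n) (Fin n) ℂ)
    (hF : ∀ x, F x = ∑ k ∈ Finset.range (p + 1), x ^ k • A k) :
    {x ∈ D | ¬ (F x).charpoly.roots.Nodup} = D ∨
      {x ∈ D | ¬ (F x).charpoly.roots.Nodup}.Finite := by
  set M : Matrix (Fin n) (Fin n) ℂ[X] := ∑ k ∈ range (p + 1), (X : ℂ[X]) ^ k • (A k).map C
  set P := M.charpoly
  have hbad : ∀ x, ¬ (F x).charpoly.roots.Nodup ↔
      (resultant P (derivative P) P.natDegree (P.natDegree - 1)).IsRoot x := fun x ↦ by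
    rw [hF, ← Matrix.map_evalRingHom_sum_X_pow_smul, Matrix.charpoly_map,
      M.charpoly_monic.not_nodup_roots_map_iff]
    rfl
  simp_rw [hbad]
  exact sep_isRoot_eq_self_or_finite _ D
end

section
/- Let Ω be a convex subset of M_{n×n}(ℂ) and let Ω_s be the set of matrices in Ω that are both nonsingular and have n distinct eigenvalues. If the closure of Ω contains at least one nonsingular matrix with distinct eigenvalues, then Ω_s is dense in Ω. -/
/-!
A matrix over `ℂ` is nonsingular with distinct eigenvalues exactly when `det A * discr A ≠ 0`,
and `det * discr` is a polynomial in the entries. Hence the good matrices form an open set, so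
`Ω` itself contains a good matrix `A`, and along the segment from any `B ∈ Ω` to `A` the
function `det * discr` is a polynomial in the parameter which does not vanish at `A`. It
therefore has finitely many zeros, so good points of the segment, which lie in `Ω` by
convexity, accumulate at `B`.
-/

open Polynomial

namespace Polynomial

variable {R S : Type*} [CommRing R] [CommRing S]

theorem discr_one : (1 : R[X]).discr = 1 := by
  simpa using discr_C (1 : R)

theorem Monic.resultant_derivative_eq {f : R[X]} (hf : f.Monic) (hdeg : f.natDegree ≠ 0) :
    resultant f (derivative f) f.natDegree (f.natDegree - 1) =
      (-1) ^ (f.natDegree * (f.natDegree - 1) / 2) * f.discr := by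
  nontriviality R
  rw [resultant_deriv (natDegree_pos_iff_degree_pos.1 (Nat.pos_of_ne_zero hdeg)),
    hf.leadingCoeff, mul_one]

theorem Monic.discr_map {f : R[X]} (hf : f.Monic) (φ : R →+* S) :
    (f.map φ).discr = φ f.discr := by
  nontriviality S
  obtain hdeg | hdeg := eq_or_ne f.natDegree 0
  · rw [eq_one_of_monic_natDegree_zero hf hdeg, Polynomial.map_one, discr_one, discr_one,
      map_one]
  have hφf := (hf.map φ).resultant_derivative_eq (by rwa [hf.natDegree_map])
  rw [hf.natDegree_map, derivative_map, resultant_map_map, hf.resultant_derivative_eq hdeg,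
    map_mul, map_pow, map_neg, map_one] at hφf
  exact (isUnit_neg_one.pow _).mul_left_cancel hφf.symm

theorem Monic.discr_ne_zero_iff {K : Type*} [Field K] {f : K[X]} (hf : f.Monic) :
    f.discr ≠ 0 ↔ f.Separable := by
  obtain hdeg | hdeg := eq_or_ne f.natDegree 0
  · simp [eq_one_of_monic_natDegree_zero hf hdeg, discr_one]
  -- as `f` is monic, padding the degree of `f'` does not change the resultant
  obtain ⟨k, hk⟩ : ∃ k, f.natDegree - 1 = (derivative f).natDegree + k :=
    Nat.exists_eq_add_of_le (natDegree_derivative_le f)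
  have h := hf.resultant_derivative_eq hdeg
  rw [hk, resultant_add_right_deg _ _ _ _ _ le_rfl, hf.coeff_natDegree, one_pow, one_mul] at h
  rw [Separable, ← not_iff_not, not_not, ← (isUnit_neg_one.pow _).mul_right_eq_zero, ← h,
    resultant_eq_zero_iff]
  simp [hf.ne_zero]

end Polynomial

namespace Matrix

variable {n R S K : Type*} [Fintype n] [DecidableEq n] [CommRing R] [CommRing S] [Field K]

theorem discr_map (M : Matrix n n R) (φ : R →+* S) : (M.map φ).discr = φ M.discr := by
  rw [discr, discr, charpoly_map, M.charpoly_monic.discr_map]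

theorem continuous_discr [TopologicalSpace R] [IsTopologicalRing R] :
    Continuous (discr : Matrix n n R → R) := by
  have h : ∀ M : Matrix n n R,
      M.discr = MvPolynomial.eval (fun p => M p.1 p.2) (mvPolynomialX n n R).discr := fun M => by
    rw [← discr_map, ← RingHom.mapMatrix_apply, mvPolynomialX_mapMatrix_eval]
  simp_rw [funext h]
  exact (MvPolynomial.continuous_eval _).comp
    (continuous_pi fun p => (continuous_apply_apply p.1 p.2))

theorem det_mul_discr_ne_zero_iff [IsAlgClosed K] (M : Matrix n n K) :
    M.det * M.discr ≠ 0 ↔ M.det ≠ 0 ∧ M.charpoly.roots.Nodup := by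
  rw [mul_ne_zero_iff, discr, M.charpoly_monic.discr_ne_zero_iff,
    nodup_roots_iff_of_splits M.charpoly_monic.ne_zero (IsAlgClosed.splits _)]

theorem finite_setOf_det_mul_discr_lineMap_eq_zero {x y : Matrix n n K}
    (hy : y.det * y.discr ≠ 0) :
    {t : K | (AffineMap.lineMap x y t).det * (AffineMap.lineMap x y t).discr = 0}.Finite := by
  set L : Matrix n n K[X] := (X : K[X]) • (y - x).map C + x.map C
  have hL : ∀ t, (evalRingHom t).mapMatrix L = AffineMap.lineMap x y t := fun t => by
    ext i j
    simp [L, AffineMap.lineMap_apply_module']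
  have heval : ∀ t, (AffineMap.lineMap x y t).det * (AffineMap.lineMap x y t).discr =
      (L.det * L.discr).eval t := fun t => by
    rw [← hL, ← coe_evalRingHom, map_mul, RingHom.map_det, RingHom.mapMatrix_apply, discr_map]
  have hne : L.det * L.discr ≠ 0 := fun h0 => hy <| by
    simpa [h0] using heval 1
  simpa only [heval, IsRoot.def] using finite_setOfPred_isRoot hne

end Matrix

open Filter Topology in
theorem Convex.subset_closure_inter_of_finite_lineMap_notMem
    {E : Type*} [AddCommGroup E] [Module ℝ E] [TopologicalSpace E] [IsTopologicalAddGroup E]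
    [ContinuousSMul ℝ E] {Ω U : Set E} (hΩ : Convex ℝ Ω) (hU : IsOpen U)
    (hmeet : (closure Ω ∩ U).Nonempty)
    (hline : ∀ x, ∀ y ∈ U, {t : ℝ | AffineMap.lineMap x y t ∉ U}.Finite) :
    Ω ⊆ closure (Ω ∩ U) := by
  obtain ⟨y, hyΩ, hyU⟩ := (closure_inter_open_nonempty_iff hU).1 hmeet
  intro x hx
  have hlim : Tendsto (AffineMap.lineMap x y) (𝓝[>] (0 : ℝ)) (𝓝 x) := by
    simpa using (AffineMap.lineMap_continuous (p := x) (q := y)).continuousWithinAt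
      (s := Set.Ioi (0:ℝ)) (x := 0) |>.tendsto
  refine mem_closure_of_tendsto hlim ?_
  have hsmall : ∀ᶠ t in 𝓝[>] (0 : ℝ), t ∈ Set.Icc (0 : ℝ) 1 :=
    Filter.mem_of_superset (Ioo_mem_nhdsGT zero_lt_one) Set.Ioo_subset_Icc_self
  have hgood : ∀ᶠ t in 𝓝[>] (0 : ℝ), AffineMap.lineMap x y t ∈ U := by
    have := (hline x y hyU).eventually_cofinite_notMem.filter_mono
      ((nhdsWithin_mono 0 fun t (ht : t ∈ Set.Ioi 0) => ne_of_gt ht).trans (nhdsNE_le_cofinite 0))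
    simpa using this
  filter_upwards [hsmall, hgood] with t ht htU
  exact ⟨hΩ.lineMap_mem hx hyΩ ht, htU⟩

/-- let `Ω ⊆ Mₙ(ℂ)` be convex and `Ω_s` the set of matrices in `Ω`
that are nonsingular and have `n` distinct eigenvalues.  If the closure of `Ω`
contains a nonsingular matrix with distinct eigenvalues, then `Ω_s` is dense in
`Ω`. -/
theorem nonsingular_distinct_eigenvalues_dense_of_convex (n : ℕ)
    (Ω : Set (Matrix (Fin n) (Fin n) ℂ)) (hconv : Convex ℝ Ω)
    (h : ∃ A ∈ closure Ω, A.det ≠ 0 ∧ A.charpoly.roots.Nodup) :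
    Ω ⊆ closure {A ∈ Ω | A.det ≠ 0 ∧ A.charpoly.roots.Nodup} := by
  have hgood (A : Matrix (Fin n) (Fin n) ℂ) :
      A.det ≠ 0 ∧ A.charpoly.roots.Nodup ↔ A.det * A.discr ≠ 0 :=
    (Matrix.det_mul_discr_ne_zero_iff A).symm
  simp_rw [hgood] at h ⊢
  refine hconv.subset_closure_inter_of_finite_lineMap_notMem
    (U := {A : Matrix (Fin n) (Fin n) ℂ | A.det * A.discr ≠ 0})
    (isOpen_ne_fun (continuous_id.matrix_det.mul Matrix.continuous_discr) continuous_const) h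
    fun x y hy => ?_
  refine ((Matrix.finite_setOf_det_mul_discr_lineMap_eq_zero (x := x) hy).preimage
    Complex.ofReal_injective.injOn).subset fun t ht => ?_
  rw [Set.mem_ofPred_eq, Set.mem_ofPred_eq, not_not, AffineMap.lineMap_apply_module',
    RCLike.real_smul_eq_coe_smul (K := ℂ), ← AffineMap.lineMap_apply_module'] at ht
  exact ht
end

section
/- Let U be an open interval in ℝ and F : U → M_{m×n}(ℂ) (m ≥ n) have real-analytic entries. Let Y(U) = {x ∈ U : F(x) has a repeated singular value}. Then either Y(U) = U or Y(U) has no limit points in U. -/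
/-!
For a Hermitian matrix `B` with eigenvalues `λ₁, …, λₙ`, the Hankel matrix `(tr B^(i+j))ᵢⱼ` of
power sums equals `VᵀV`, where `V` is the Vandermonde matrix of the `λᵢ`; so its determinant
`∏_{i<j} (λⱼ - λᵢ)²` vanishes exactly when `B` has a repeated eigenvalue. For `B = F(x)ᴴ F(x)`
this determinant is a polynomial in the entries of `F(x)` and their conjugates, hence real-analytic
in `x`, and by the identity theorem its zero set in the interval `U` is either all of `U` or has no
accumulation point in `U`.
-/

open Matrix Filter

namespace Matrix

def traceHankel {R : Type*} [Semiring R] {N : ℕ} (A : Matrix (Fin N) (Fin N) R) :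
    Matrix (Fin N) (Fin N) R :=
  of fun i j => (A ^ ((i : ℕ) + j)).trace

namespace IsHermitian

variable {𝕜 : Type*} [RCLike 𝕜]

lemma trace_pow_eq_sum_eigenvalues_pow {n : Type*} [Fintype n] [DecidableEq n]
    {A : Matrix n n 𝕜} (hA : A.IsHermitian) (k : ℕ) :
    (A ^ k).trace = ∑ i, (hA.eigenvalues i : 𝕜) ^ k := by
  conv_lhs => rw [hA.spectral_theorem, ← map_pow, Unitary.conjStarAlgAut_apply, trace_mul_cycle,
    Unitary.coe_star_mul_self, one_mul, diagonal_pow, trace_diagonal]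
  simp

variable {N : ℕ} {A : Matrix (Fin N) (Fin N) 𝕜}

lemma traceHankel_eq (hA : A.IsHermitian) :
    traceHankel A = (vandermonde fun i => (hA.eigenvalues i : 𝕜))ᵀ *
      vandermonde fun i => (hA.eigenvalues i : 𝕜) := by
  ext i j
  rw [vandermonde_transpose_mul_vandermonde, traceHankel, of_apply,
    hA.trace_pow_eq_sum_eigenvalues_pow]

lemma det_traceHankel_eq_zero_iff (hA : A.IsHermitian) :
    (traceHankel A).det = 0 ↔ ¬ A.charpoly.roots.Nodup := by
  rw [hA.traceHankel_eq, det_mul, det_transpose, mul_self_eq_zero, ← not_ne_iff,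
    det_vandermonde_ne_zero_iff, hA.roots_charpoly_eq_eigenvalues,
    Multiset.nodup_map_iff_inj_on Finset.univ.nodup]
  simp [Function.Injective]

end IsHermitian

end Matrix

def EntrywiseAnalyticOnNhd (𝕜 : Type*) {E R m n : Type*} [NontriviallyNormedField 𝕜]
    [NormedAddCommGroup E] [NormedSpace 𝕜 E] [NormedRing R] [NormedAlgebra 𝕜 R]
    (F : E → Matrix m n R) (s : Set E) : Prop :=
  ∀ i j, AnalyticOnNhd 𝕜 (fun x => F x i j) s

namespace EntrywiseAnalyticOnNhd

section NormedCommRing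

variable {𝕜 E R : Type*} [NontriviallyNormedField 𝕜] [NormedAddCommGroup E] [NormedSpace 𝕜 E]
  [NormedCommRing R] [NormedAlgebra 𝕜 R] {l m n : Type*} {s : Set E}

lemma mul [Fintype m] {F : E → Matrix l m R} {G : E → Matrix m n R}
    (hF : EntrywiseAnalyticOnNhd 𝕜 F s) (hG : EntrywiseAnalyticOnNhd 𝕜 G s) :
    EntrywiseAnalyticOnNhd 𝕜 (fun x => F x * G x) s :=
  fun i j => by
    simp only [mul_apply]
    exact Finset.analyticOnNhd_fun_sum _ fun k _ => (hF i k).mul (hG k j)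

lemma pow [Fintype n] [DecidableEq n] {F : E → Matrix n n R}
    (hF : EntrywiseAnalyticOnNhd 𝕜 F s) (k : ℕ) :
    EntrywiseAnalyticOnNhd 𝕜 (fun x => F x ^ k) s := by
  induction k with
  | zero => exact fun _ _ => analyticOnNhd_const
  | succ k ih => simpa only [pow_succ] using ih.mul hF

lemma trace [Fintype n] {F : E → Matrix n n R} (hF : EntrywiseAnalyticOnNhd 𝕜 F s) :
    AnalyticOnNhd 𝕜 (fun x => (F x).trace) s :=
  Finset.analyticOnNhd_fun_sum _ fun i _ => hF i i

lemma det [Fintype n] [DecidableEq n] {F : E → Matrix n n R}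
    (hF : EntrywiseAnalyticOnNhd 𝕜 F s) :
    AnalyticOnNhd 𝕜 (fun x => (F x).det) s := by
  simp only [det_apply']
  exact Finset.analyticOnNhd_fun_sum _ fun σ _ =>
    analyticOnNhd_const.mul (Finset.analyticOnNhd_fun_prod _ fun i _ => hF (σ i) i)

lemma traceHankel {N : ℕ} {F : E → Matrix (Fin N) (Fin N) R}
    (hF : EntrywiseAnalyticOnNhd 𝕜 F s) :
    EntrywiseAnalyticOnNhd 𝕜 (fun x => (F x).traceHankel) s :=
  fun _ _ => (hF.pow _).trace

end NormedCommRing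

lemma conjTranspose {E m n : Type*} [NormedAddCommGroup E] [NormedSpace ℝ E] {s : Set E}
    {F : E → Matrix m n ℂ} (hF : EntrywiseAnalyticOnNhd ℝ F s) :
    EntrywiseAnalyticOnNhd ℝ (fun x => (F x)ᴴ) s :=
  fun i j x hx => (Complex.conjCLE.analyticAt _).comp (hF j i x hx)

end EntrywiseAnalyticOnNhd

lemma AnalyticOnNhd.sep_eq_zero_eq_self_or_forall_not_accPt {𝕜 E : Type*}
    [NontriviallyNormedField 𝕜] [NormedAddCommGroup E] [NormedSpace 𝕜 E] {g : 𝕜 → E}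
    {U : Set 𝕜} (hg : AnalyticOnNhd 𝕜 g U) (hU : IsPreconnected U) :
    {x ∈ U | g x = 0} = U ∨ ∀ x ∈ U, ¬ AccPt x (𝓟 {x ∈ U | g x = 0}) := by
  refine or_iff_not_imp_right.2 fun h => ?_
  push Not at h
  obtain ⟨x₀, hx₀, hacc⟩ := h
  have hzero := hg.eqOn_zero_of_preconnected_of_frequently_eq_zero hU hx₀
    ((accPt_iff_frequently_nhdsNE.1 hacc).mono fun _ hx => hx.2)
  exact Set.sep_eq_self_iff_mem_true.2 hzero

theorem repeated_singular_value_analytic_general (m n : ℕ) (U : Set ℝ) (hUi : U.OrdConnected)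
    (F : ℝ → Matrix (Fin m) (Fin n) ℂ)
    (hF : ∀ i j, AnalyticOnNhd ℝ (fun x => F x i j) U) :
    {x ∈ U | ¬ ((F x)ᴴ * F x).charpoly.roots.Nodup} = U ∨
      ∀ x ∈ U, ¬ AccPt x (Filter.principal {x ∈ U | ¬ ((F x)ᴴ * F x).charpoly.roots.Nodup}) := by
  have hFa : EntrywiseAnalyticOnNhd ℝ F U := hF
  simp_rw [← (isHermitian_conjTranspose_mul_self (F _)).det_traceHankel_eq_zero_iff]
  exact (hFa.conjTranspose.mul hFa).traceHankel.det.sep_eq_zero_eq_self_or_forall_not_accPt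
    hUi.isPreconnected

/-- if `F : U → M_{m×n}(ℂ)` (`m ≥ n`) has real-analytic entries on
an open interval `U ⊆ ℝ`, then the set `Y` of points of `U` where `F` has a
repeated singular value (i.e. the characteristic polynomial of `F(x)ᴴ F(x)` has
a multiple root) is either all of `U` or has no limit points in `U`. -/
theorem repeated_singular_value_analytic (m n : ℕ) (hmn : n ≤ m) (U : Set ℝ)
    (hUo : IsOpen U) (hUi : U.OrdConnected) (hne : U.Nonempty)
    (F : ℝ → Matrix (Fin m) (Fin n) ℂ)
    (hF : ∀ i j, AnalyticOnNhd ℝ (fun x => F x i j) U) :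
    {x ∈ U | ¬ ((F x)ᴴ * F x).charpoly.roots.Nodup} = U ∨
      ∀ x ∈ U, ¬ AccPt x (Filter.principal {x ∈ U | ¬ ((F x)ᴴ * F x).charpoly.roots.Nodup}) :=
  repeated_singular_value_analytic_general m n U hUi F hF
end

section
/- Let F : U → M_{m×n}(ℂ) (m ≥ n, U ⊆ ℝ) be defined by F(x) = Σ_{k=0}^p A_k x^k for fixed matrices A_k ∈ M_{m×n}(ℂ). Let Y(U) = {x ∈ U : F(x) has a repeated singular value}. Then either Y(U) = U or Y(U) is finite. -/
open Matrix Polynomial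
open scoped nonZeroDivisors

/-- Auxiliary: evaluating the polynomial matrix gives `(F x)ᴴ * F x`. -/
private lemma eval_aux (m n p : ℕ) (A : ℕ → Matrix (Fin m) (Fin n) ℂ)
    (F : ℝ → Matrix (Fin m) (Fin n) ℂ)
    (hF : ∀ x, F x = ∑ k ∈ Finset.range (p + 1), x ^ k • A k) (x : ℝ) :
    ((Matrix.of fun (i : Fin n) (j : Fin m) => ∑ k ∈ Finset.range (p + 1),
        Polynomial.C (starRingEnd ℂ (A k j i)) * Polynomial.X ^ k) *
      (Matrix.of fun (i : Fin m) (j : Fin n) => ∑ k ∈ Finset.range (p + 1),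
        Polynomial.C (A k i j) * Polynomial.X ^ k)).map (Polynomial.evalRingHom (x : ℂ))
      = (F x)ᴴ * F x := by
  have hent : ∀ l j, F x l j = ∑ k ∈ Finset.range (p + 1), (x : ℂ) ^ k * A k l j := by
    intro l j
    simp [hF, Matrix.sum_apply, Complex.real_smul]
  ext i j
  simp only [Matrix.map_apply, Matrix.mul_apply, Matrix.of_apply, conjTranspose_apply,
    coe_evalRingHom]
  rw [Polynomial.eval_finset_sum]
  refine Finset.sum_congr rfl fun l _ => ?_
  have h1 : Polynomial.eval (x : ℂ)
      (∑ k ∈ Finset.range (p + 1), Polynomial.C (A k l j) * Polynomial.X ^ k) = F x l j := by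
    rw [Polynomial.eval_finset_sum, hent]
    simp only [eval_mul, eval_C, eval_pow, eval_X]
    exact Finset.sum_congr rfl fun k _ => mul_comm _ _
  have h2 : Polynomial.eval (x : ℂ)
      (∑ k ∈ Finset.range (p + 1), Polynomial.C (starRingEnd ℂ (A k l i)) * Polynomial.X ^ k)
      = star (F x l i) := by
    rw [Polynomial.eval_finset_sum, hent, star_sum]
    simp only [eval_mul, eval_C, eval_pow, eval_X]
    refine Finset.sum_congr rfl fun k _ => ?_
    simp only [star_mul', star_pow, Complex.star_def, Complex.conj_ofReal]
    ring
  rw [eval_mul, h1, h2]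

/-- for a matrix polynomial `F x = ∑_{k=0}^p A_k x^k` with
`A_k ∈ M_{m×n}(ℂ)` (`m ≥ n`) on `U ⊆ ℝ`, the set of `x ∈ U` where `F x` has a
repeated singular value is either all of `U` or finite. -/
theorem repeated_singular_value_matrix_polynomial (m n p : ℕ) (hmn : n ≤ m)
    (U : Set ℝ) (A : ℕ → Matrix (Fin m) (Fin n) ℂ)
    (F : ℝ → Matrix (Fin m) (Fin n) ℂ)
    (hF : ∀ x, F x = ∑ k ∈ Finset.range (p + 1), x ^ k • A k) :
    {x ∈ U | ¬ ((F x)ᴴ * F x).charpoly.roots.Nodup} = U ∨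
      {x ∈ U | ¬ ((F x)ᴴ * F x).charpoly.roots.Nodup}.Finite := by
  classical
  set M : Matrix (Fin n) (Fin n) ℂ[X] :=
    (Matrix.of fun (i : Fin n) (j : Fin m) => ∑ k ∈ Finset.range (p + 1),
        Polynomial.C (starRingEnd ℂ (A k j i)) * Polynomial.X ^ k) *
    (Matrix.of fun (i : Fin m) (j : Fin n) => ∑ k ∈ Finset.range (p + 1),
        Polynomial.C (A k i j) * Polynomial.X ^ k) with hM
  set Q : (ℂ[X])[X] := M.charpoly with hQdef
  have hQmonic : Q.Monic := M.charpoly_monic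
  have hq : ∀ x : ℝ, ((F x)ᴴ * F x).charpoly = Q.map (Polynomial.evalRingHom (x : ℂ)) := by
    intro x
    rw [← eval_aux m n p A F hF x, Matrix.charpoly_map]
  set K := FractionRing ℂ[X]
  have hinj : Function.Injective (algebraMap ℂ[X] K) := IsFractionRing.injective _ _
  haveI : CharZero K := charZero_of_injective_algebraMap hinj
  set Qt : K[X] := Q.map (algebraMap ℂ[X] K) with hQt
  have hQtmonic : Qt.Monic := hQmonic.map _
  by_cases hsf : Squarefree Qt
  case neg =>
    -- a monic square factor descends to `ℂ[X][X]`; every `x` is bad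
    left
    rw [Squarefree] at hsf
    push_neg at hsf
    obtain ⟨R0, hR0dvd, hR0nu⟩ := hsf
    have hR0ne : R0 ≠ 0 := by
      rintro rfl
      exact hQtmonic.ne_zero (zero_dvd_iff.mp (by simpa using hR0dvd))
    set Rh : K[X] := R0 * Polynomial.C R0.leadingCoeff⁻¹ with hRh
    have hCunit : IsUnit (Polynomial.C R0.leadingCoeff⁻¹) :=
      isUnit_C.mpr (inv_ne_zero (leadingCoeff_ne_zero.mpr hR0ne)).isUnit
    have hRhmonic : Rh.Monic := monic_mul_leadingCoeff_inv hR0ne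
    have hRhdvd : Rh * Rh ∣ Qt := by
      have h1 : Rh * Rh = (R0 * R0) * (Polynomial.C R0.leadingCoeff⁻¹ *
          Polynomial.C R0.leadingCoeff⁻¹) := by ring
      rw [h1]
      exact ((hCunit.mul hCunit).mul_right_dvd).mpr hR0dvd
    have hRhdeg : 0 < Rh.degree := by
      apply degree_pos_of_ne_zero_of_nonunit hRhmonic.ne_zero
      intro hu
      exact hR0nu (isUnit_of_mul_isUnit_left (hRh ▸ hu))
    -- descend Rh to ℂ[X][X]
    obtain ⟨R, hRmap⟩ := IsIntegrallyClosed.eq_map_mul_C_of_dvd K hQmonic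
      ((dvd_mul_right Rh Rh).trans hRhdvd)
    rw [hRhmonic.leadingCoeff, Polynomial.C_1, mul_one] at hRmap
    have hRmonic : R.Monic :=
      Polynomial.monic_of_injective hinj (by rw [hRmap]; exact hRhmonic)
    have hRdvd : R * R ∣ Q := by
      rw [← Polynomial.Monic.dvd_iff_fraction_map_dvd_fraction_map (K := K) hQmonic
        (hRmonic.mul hRmonic)]
      rw [Polynomial.map_mul, hRmap]
      exact hRhdvd
    have hRdeg : 0 < R.degree := by
      rwa [← degree_map_eq_of_injective hinj R, hRmap]
    -- conclude: every x is bad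
    ext x
    simp only [Set.mem_setOf_eq, Set.mem_sep_iff]
    refine ⟨fun h => h.1, fun hx => ⟨hx, ?_⟩⟩
    intro hnodup
    obtain ⟨S, hS⟩ := hRdvd
    set φ := Polynomial.evalRingHom (x : ℂ) with hφ
    set r : ℂ[X] := R.map φ with hr
    have hrmonic : r.Monic := hRmonic.map φ
    have hrdeg : 0 < r.degree := by
      rw [hr, hRmonic.degree_map φ]
      exact hRdeg
    obtain ⟨z, hz⟩ := Complex.exists_root hrdeg
    have hd1 : (Polynomial.X - Polynomial.C z) ∣ r := dvd_iff_isRoot.mpr hz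
    have hdvd2 : (Polynomial.X - Polynomial.C z) ^ 2 ∣ ((F x)ᴴ * F x).charpoly := by
      rw [hq x, hS, Polynomial.map_mul, Polynomial.map_mul, sq]
      exact dvd_mul_of_dvd_left (mul_dvd_mul hd1 hd1) _
    have hqne : ((F x)ᴴ * F x).charpoly ≠ 0 := (Matrix.charpoly_monic _).ne_zero
    have h2 : 2 ≤ rootMultiplicity z ((F x)ᴴ * F x).charpoly :=
      (le_rootMultiplicity_iff hqne).mpr hdvd2
    have hcount := Polynomial.count_roots ((F x)ᴴ * F x).charpoly (a := z)
    have := Multiset.nodup_iff_count_le_one.mp hnodup z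
    omega
  case pos =>
    -- squarefree over the fraction field: coprime with derivative, clear denominators
    right
    have hsep : Qt.Separable := PerfectField.separable_iff_squarefree.mpr hsf
    obtain ⟨a, b, hab⟩ := hsep
    obtain ⟨ca, hca⟩ := IsLocalization.integerNormalization_map_to_map (ℂ[X])⁰ a
    obtain ⟨cb, hcb⟩ := IsLocalization.integerNormalization_map_to_map (ℂ[X])⁰ b
    set Na := IsLocalization.integerNormalization (ℂ[X])⁰ a with hNa
    set Nb := IsLocalization.integerNormalization (ℂ[X])⁰ b with hNb
    set c : ℂ[X] := (ca : ℂ[X]) * (cb : ℂ[X]) with hc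
    have hcne : c ≠ 0 :=
      mul_ne_zero (nonZeroDivisors.ne_zero ca.2) (nonZeroDivisors.ne_zero cb.2)
    have key : Polynomial.C (cb : ℂ[X]) * Na * Q
        + Polynomial.C (ca : ℂ[X]) * Nb * Polynomial.derivative Q = Polynomial.C c := by
      apply Polynomial.map_injective (algebraMap ℂ[X] K) hinj
      have hsmul : ∀ (d : ℂ[X]) (f : K[X]), d • f = Polynomial.C (algebraMap ℂ[X] K d) * f := by
        intro d f
        rw [← algebraMap_smul K d f, Polynomial.smul_eq_C_mul]
      rw [Polynomial.map_add, Polynomial.map_mul, Polynomial.map_mul, Polynomial.map_mul,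
        Polynomial.map_mul, hca, hcb, Polynomial.map_C, Polynomial.map_C, Polynomial.map_C,
        hsmul, hsmul, ← Polynomial.derivative_map]
      rw [hc, _root_.map_mul, Polynomial.C_mul]
      rw [← hQt]
      linear_combination (Polynomial.C ((algebraMap ℂ[X] K) (ca : ℂ[X])) *
        Polynomial.C ((algebraMap ℂ[X] K) (cb : ℂ[X]))) * hab
    -- bad points are roots of c
    apply Set.Finite.subset (Set.Finite.preimage
      (f := fun x : ℝ => (x : ℂ)) (Set.injOn_of_injective (fun u v h => by exact_mod_cast h))
      (Polynomial.finite_setOf_isRoot hcne))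
    intro x hx
    simp only [Set.mem_preimage, Set.mem_setOf_eq]
    by_contra hroot
    apply hx.2
    set φ := Polynomial.evalRingHom (x : ℂ) with hφ
    have hd : φ c ≠ 0 := hroot
    have key2 : (Polynomial.C (cb : ℂ[X]) * Na).map φ * (Q.map φ)
        + (Polynomial.C (ca : ℂ[X]) * Nb).map φ * Polynomial.derivative (Q.map φ)
        = Polynomial.C (φ c) := by
      rw [Polynomial.derivative_map, ← Polynomial.map_mul, ← Polynomial.map_mul,
        ← Polynomial.map_add, key, Polynomial.map_C]
    have hcop : IsCoprime (Q.map φ) (Polynomial.derivative (Q.map φ)) := by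
      refine ⟨Polynomial.C (φ c)⁻¹ * (Polynomial.C (cb : ℂ[X]) * Na).map φ,
        Polynomial.C (φ c)⁻¹ * (Polynomial.C (ca : ℂ[X]) * Nb).map φ, ?_⟩
      rw [mul_assoc, mul_assoc, ← mul_add, key2, ← Polynomial.C_mul,
        inv_mul_cancel₀ hd, Polynomial.C_1]
    have hsep' : (Q.map φ).Separable := hcop
    rw [hq x]
    exact Polynomial.nodup_roots hsep'
end

section
/- For every n×n complex matrix A and every ε > 0, there exists a complex symmetric matrix S (Sᵀ = S) with ‖S‖_F ≤ ε such that A + S has n distinct singular values. -/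
/-!
Take `S = t • D` with `D = diagonal (1, …, n)` and `t > 0`. With `s = t⁻¹` we have
`(A + tD)ᴴ (A + tD) = t² (D + sA)ᴴ (D + sA)`, and for real `s` the right-hand factor is the value
at `s` of the polynomial matrix `(D + X Aᴴ) (D + X A)`. The resultant of its characteristic
polynomial and the derivative of that polynomial is a polynomial in `s` whose zeros are exactly
the `s` at which the characteristic polynomial is not separable. It is nonzero at `s = 0`, where the
matrix is `D²` with the distinct eigenvalues `1, 4, …, n²`, so it has finitely many zeros, and any
large `s` avoiding them gives a small `t`.
-/

open Polynomial Matrix Filter Topology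

theorem Polynomial.resultant_derivative_ne_zero_iff {K : Type*} [Field K] [CharZero K]
    {f : K[X]} (hf : f ≠ 0) :
    f.resultant (derivative f) f.natDegree (f.natDegree - 1) ≠ 0 ↔ f.Separable := by
  rw [← natDegree_derivative, Ne, resultant_eq_zero_iff]
  simp [hf, Separable]

namespace Matrix

variable {ι K : Type*} [Field K]

theorem map_evalRingHom_map_C_add_X_smul (D B : Matrix ι ι K) (x : K) :
    (D.map C + (X : K[X]) • B.map C).map (evalRingHom x) = D + x • B := by
  ext i j
  simp [mul_comm x]

variable [Fintype ι] [DecidableEq ι]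

theorem charpoly_smul {c : K} (hc : c ≠ 0) (M : Matrix ι ι K) :
    (c • M).charpoly = C (c ^ Fintype.card ι) * M.charpoly.comp (C c⁻¹ * X) := by
  have hmap : (compRingHom (C c⁻¹ * X)).mapMatrix (charmatrix M) = C c⁻¹ • charmatrix (c • M) := by
    ext i j : 1
    have hC : C c⁻¹ * C (c * M i j) = C (M i j) := by rw [← C_mul, inv_mul_cancel_left₀ hc]
    by_cases hij : i = j
    · subst hij
      simp only [RingHom.mapMatrix_apply, coe_compRingHom, map_apply, charmatrix_apply_eq,
        sub_comp, X_comp, C_comp, Matrix.smul_apply, smul_eq_mul, mul_sub, hC]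
    · simp only [RingHom.mapMatrix_apply, coe_compRingHom, map_apply,
        charmatrix_apply_ne _ _ _ hij, neg_comp, C_comp, Matrix.smul_apply, smul_eq_mul, mul_neg,
        hC]
  rw [charpoly, charpoly, ← coe_compRingHom_apply, RingHom.map_det, hmap, det_smul, ← mul_assoc,
    ← C_pow, ← C_mul, ← mul_pow, mul_inv_cancel₀ hc, one_pow, C_1, one_mul]

theorem nodup_roots_charpoly_smul_iff {c : K} (hc : c ≠ 0) (M : Matrix ι ι K) :
    (c • M).charpoly.roots.Nodup ↔ M.charpoly.roots.Nodup := by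
  have h := M.charpoly.map_roots_comp_C_mul_X_add_C c⁻¹ 0 (isUnit_iff_ne_zero.mpr (inv_ne_zero hc))
  simp only [map_zero, add_zero] at h
  rw [charpoly_smul hc, roots_C_mul _ (pow_ne_zero _ hc), ← h,
    Multiset.nodup_map_iff_of_injective (mul_right_injective₀ (inv_ne_zero hc))]

theorem finite_setOf_not_separable_charpoly_eval [CharZero K] (P : Matrix ι ι K[X]) {a : K}
    (ha : (P.map (evalRingHom a)).charpoly.Separable) :
    {x | ¬ (P.map (evalRingHom x)).charpoly.Separable}.Finite := by
  set d := Fintype.card ι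
  set G := P.charpoly.resultant (derivative P.charpoly) d (d - 1)
  have hdeg : ∀ x : K, (P.map (evalRingHom x)).charpoly.natDegree = d := fun x ↦
    charpoly_natDegree_eq_dim _
  have heval : ∀ x, G.eval x ≠ 0 ↔ (P.map (evalRingHom x)).charpoly.Separable := by
    intro x
    rw [← coe_evalRingHom, ← resultant_map_map, ← derivative_map, ← charpoly_map, ← hdeg x]
    exact resultant_derivative_ne_zero_iff (charpoly_monic _).ne_zero
  have hG : G ≠ 0 := fun h ↦ (heval a).mpr ha (by rw [h, eval_zero])
  refine (finite_setOfPred_isRoot hG).subset fun x hx ↦ ?_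
  exact not_not.mp (mt (heval x).mp hx)

theorem eventually_cofinite_separable_charpoly_conjTranspose_mul_self (A D : Matrix ι ι ℂ)
    (hD : D.IsHermitian) (hDsq : (D * D).charpoly.Separable) :
    ∀ᶠ s : ℝ in cofinite, ((D + (s : ℂ) • A)ᴴ * (D + (s : ℂ) • A)).charpoly.Separable := by
  set P := (D.map C + (X : ℂ[X]) • Aᴴ.map C) * (D.map C + (X : ℂ[X]) • A.map C)
  have hP : ∀ x : ℂ, P.map (evalRingHom x) = (D + x • Aᴴ) * (D + x • A) := fun x ↦ by
    rw [Matrix.map_mul, map_evalRingHom_map_C_add_X_smul, map_evalRingHom_map_C_add_X_smul]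
  have h0 : (P.map (evalRingHom 0)).charpoly.Separable := by
    rw [hP]
    simpa using hDsq
  have hfin := finite_setOf_not_separable_charpoly_eval P h0
  refine eventually_cofinite.mpr ((hfin.preimage Complex.ofReal_injective.injOn).subset ?_)
  intro s hs
  have hconj : (D + (s : ℂ) • A)ᴴ = D + (s : ℂ) • Aᴴ := by
    rw [conjTranspose_add, conjTranspose_smul, hD.eq, Complex.star_def, Complex.conj_ofReal]
  simpa only [Set.mem_preimage, Set.mem_ofPred_eq, hP, ← hconj] using hs

theorem sqrt_sum_norm_sq_smul {m n 𝕜 : Type*} [Fintype m] [Fintype n] [NormedField 𝕜]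
    (c : 𝕜) (M : Matrix m n 𝕜) :
    √(∑ i, ∑ j, ‖(c • M) i j‖ ^ 2) = ‖c‖ * √(∑ i, ∑ j, ‖M i j‖ ^ 2) := by
  simp_rw [Matrix.smul_apply, smul_eq_mul, norm_mul, mul_pow, ← Finset.mul_sum]
  rw [Real.sqrt_mul (sq_nonneg _), Real.sqrt_sq (norm_nonneg _)]

end Matrix

/-- for every `n × n` complex matrix `A` and every `ε > 0` there is
a complex symmetric matrix `S` with Frobenius norm at most `ε` such that `A + S`
has `n` distinct singular values. -/
theorem exists_symmetric_perturbation_distinct_singular_values (n : ℕ)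
    (A : Matrix (Fin n) (Fin n) ℂ) (ε : ℝ) (hε : 0 < ε) :
    ∃ S : Matrix (Fin n) (Fin n) ℂ, Sᵀ = S ∧
      Real.sqrt (∑ i, ∑ j, ‖S i j‖ ^ 2) ≤ ε ∧
      ((A + S)ᴴ * (A + S)).charpoly.roots.Nodup := by
  set D : Matrix (Fin n) (Fin n) ℂ := diagonal fun i ↦ ((i : ℕ) + 1 : ℂ)
  have hD : D.IsHermitian := isHermitian_diagonal_of_self_adjoint _ <| by
    simp [IsSelfAdjoint, Pi.star_def]
  have hDsq : (D * D).charpoly.Separable := by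
    rw [diagonal_mul_diagonal, charpoly_diagonal, separable_prod_X_sub_C_iff]
    intro i j h
    beta_reduce at h
    have h' : ((i : ℕ) + 1) * ((i : ℕ) + 1) = ((j : ℕ) + 1) * ((j : ℕ) + 1) := by exact_mod_cast h
    exact Fin.ext (by simpa using Nat.mul_self_inj.mp h')
  set F := √(∑ i, ∑ j, ‖D i j‖ ^ 2)
  obtain ⟨t, hsep, htF, ht⟩ : ∃ t : ℝ,
      ((D + ((t⁻¹ : ℝ) : ℂ) • A)ᴴ * (D + ((t⁻¹ : ℝ) : ℂ) • A)).charpoly.Separable ∧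
        t < ε / (F + 1) ∧ 0 < t :=
    ((tendsto_inv_nhdsGT_zero.eventually
      ((eventually_cofinite_separable_charpoly_conjTranspose_mul_self A D hD hDsq).filter_mono
        atTop_le_cofinite)).and
      ((eventually_lt_nhds (div_pos hε (by positivity))).filter_mono nhdsWithin_le_nhds |>.and
        self_mem_nhdsWithin)).exists
  refine ⟨(t : ℂ) • D, by rw [transpose_smul, diagonal_transpose], ?_, ?_⟩
  · rw [sqrt_sum_norm_sq_smul, Complex.norm_real, Real.norm_of_nonneg ht.le]
    calc t * F ≤ t * (F + 1) := by gcongr; linarith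
      _ ≤ ε := ((lt_div_iff₀ (by positivity)).mp htF).le
  · have hscale : A + (t : ℂ) • D = (t : ℂ) • (D + ((t⁻¹ : ℝ) : ℂ) • A) := by
      rw [smul_add, smul_smul, ← Complex.ofReal_mul, mul_inv_cancel₀ ht.ne', Complex.ofReal_one,
        one_smul, add_comm]
    rw [hscale, conjTranspose_smul, Complex.star_def, Complex.conj_ofReal, smul_mul_smul_comm,
      nodup_roots_charpoly_smul_iff (by simp [ht.ne'])]
    exact nodup_roots hsep
end
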